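/- If π is a PX attack with n steps, then the pattern obtained from π by emptying any one square containing a stone is a PX threat with at most n+1 steps, or a stronger pattern (an attack or victory). -/

import Mathlib

/- # A formal model of Gomoku patterns and restricted games -/

abbrev Square := ℤ × ℤ

inductive Cell
  | px | py | empty
deriving DecidableEq

/-- A pattern: a finite set of board squares together with their contents. -/
structure Pattern where
  dom : Finset Square
  val : Square → Cell

def Pattern.emptySquares (p : Pattern) : Finset Square :=
  p.dom.filter (fun s => p.val s = Cell.empty)

/-- Fill (or empty) a square of the pattern with the given content. -/
def Pattern.fill (p : Pattern) (s : Square) (c : Cell) : Pattern :=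
  ⟨p.dom, fun t => if t = s then c else p.val t⟩

/-- Remove a square from the pattern. -/
def Pattern.erase (p : Pattern) (s : Square) : Pattern :=
  ⟨p.dom.erase s, p.val⟩

/-- A PX pattern contains no PY stones. -/
def Pattern.isPX (p : Pattern) : Prop :=
  ∀ s ∈ p.dom, p.val s ≠ Cell.py

/-- The four alignment directions. -/
def dirs : List Square := [(1, 0), (0, 1), (1, 1), (1, -1)]

def shift (s d : Square) (i : ℕ) : Square :=
  (s.1 + (i : ℤ) * d.1, s.2 + (i : ℤ) * d.2)

/-- A block: five aligned consecutive squares starting at `s` in direction `d`. -/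
def blockSquares (s d : Square) : Finset Square :=
  (Finset.range 5).image (fun i => shift s d i)

/-- A line: nine aligned consecutive squares. -/
def lineSquares (s d : Square) : Finset Square :=
  (Finset.range 9).image (fun i => shift s d i)

def lineCenter (s d : Square) : Square := shift s d 4

/-- Five aligned consecutive stones of colour `c` inside the pattern. -/
def hasFive (p : Pattern) (c : Cell) : Prop :=
  ∃ s d, d ∈ dirs ∧ blockSquares s d ⊆ p.dom ∧ ∀ t ∈ blockSquares s d, p.val t = c

/-- `winsIn b n p`: in the game restricted to `p`, with PX to move iff `b`,
PX (playing optimally) forces a five-in-a-row within `n` further plies,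
against any play of PY. -/
def winsIn : Bool → ℕ → Pattern → Prop
  | _, 0, p => hasFive p Cell.px
  | true, n + 1, p =>
      hasFive p Cell.px ∨ (¬ hasFive p Cell.py ∧
        ∃ s ∈ p.emptySquares, winsIn false n (p.fill s Cell.px))
  | false, n + 1, p =>
      hasFive p Cell.px ∨ (¬ hasFive p Cell.py ∧ p.emptySquares.Nonempty ∧
        ∀ s ∈ p.emptySquares, winsIn true n (p.fill s Cell.py))

/-- PX wins the restricted game moving first. -/
def pxWinsFirst (p : Pattern) : Prop := ∃ n, winsIn true n p

/-- PX wins the restricted game moving second. -/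
def pxWinsSecond (p : Pattern) : Prop := ∃ n, winsIn false n p

/-- A PX victory: a PX pattern where PX wins moving first or second. -/
def isVictory (p : Pattern) : Prop := p.isPX ∧ pxWinsFirst p ∧ pxWinsSecond p

/-- A victory of `n` steps: PX, moving second, wins placing `n` stones
(i.e. within `2*n` plies) and no fewer. -/
def victorySteps (p : Pattern) (n : ℕ) : Prop :=
  isVictory p ∧ winsIn false (2 * n) p ∧ ∀ m < n, ¬ winsIn false (2 * m) p

/-- A trigger of a pattern: an empty square whose filling by PX yields a PX victory. -/
def isTrigger (p : Pattern) (s : Square) : Prop :=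
  s ∈ p.emptySquares ∧ isVictory (p.fill s Cell.px)

/-- A PX attack: a PX pattern, not a victory, with a trigger. -/
def isAttack (p : Pattern) : Prop :=
  p.isPX ∧ ¬ isVictory p ∧ ∃ s, isTrigger p s

/-- An attack of `n` steps: `n` is one plus the steps of the fastest victory
reachable by playing a trigger. -/
def attackSteps (p : Pattern) (n : ℕ) : Prop :=
  isAttack p ∧ 1 ≤ n ∧
  (∃ s, isTrigger p s ∧ victorySteps (p.fill s Cell.px) (n - 1)) ∧
  (∀ s m, isTrigger p s → victorySteps (p.fill s Cell.px) m → n - 1 ≤ m)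

/-- A PX threat: a PX pattern, neither victory nor attack, with an empty square
whose filling by PX yields a PX attack. -/
def isThreat (p : Pattern) : Prop :=
  p.isPX ∧ ¬ isVictory p ∧ ¬ isAttack p ∧
  ∃ s ∈ p.emptySquares, isAttack (p.fill s Cell.px)

/-- A threat of `n` steps: one plus the steps of the fastest reachable attack. -/
def threatSteps (p : Pattern) (n : ℕ) : Prop :=
  isThreat p ∧ 2 ≤ n ∧
  (∃ s ∈ p.emptySquares, attackSteps (p.fill s Cell.px) (n - 1)) ∧
  (∀ s ∈ p.emptySquares, ∀ m, attackSteps (p.fill s Cell.px) m → n - 1 ≤ m)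

/-- `q` is a sub-pattern of `p`. -/
def SubPattern (q p : Pattern) : Prop :=
  q.dom ⊆ p.dom ∧ ∀ s ∈ q.dom, q.val s = p.val s

/-- Two patterns are compatible if they agree on common squares. -/
def Compatible (p q : Pattern) : Prop :=
  ∀ s ∈ p.dom ∩ q.dom, p.val s = q.val s

/-- Union of two (compatible) patterns. -/
def Pattern.union (p q : Pattern) : Pattern :=
  ⟨p.dom ∪ q.dom, fun s => if s ∈ p.dom then p.val s else q.val s⟩

open Classical in
/-- The defence of an attack: the empty squares where PY, moving first in the
restricted game, can play to stop PX from winning. -/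
noncomputable def Defence (p : Pattern) : Finset Square :=
  p.emptySquares.filter (fun s => ¬ pxWinsFirst (p.fill s Cell.py))

/-- A simple five as a relative pattern: exactly one block, all PX stones. -/
def isS5Pattern (q : Pattern) : Prop :=
  ∃ s d, d ∈ dirs ∧ q.dom = blockSquares s d ∧ ∀ t ∈ q.dom, q.val t = Cell.px

/-- A simple four as a relative pattern: one block, four PX stones, one empty. -/
def isS4Pattern (q : Pattern) : Prop :=
  ∃ s d, d ∈ dirs ∧ q.dom = blockSquares s d ∧
    (q.dom.filter (fun t => q.val t = Cell.px)).card = 4 ∧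
    (q.dom.filter (fun t => q.val t = Cell.empty)).card = 1

/-- A simple three as a relative pattern: one block, three PX stones, two empty. -/
def isS3Pattern (q : Pattern) : Prop :=
  ∃ s d, d ∈ dirs ∧ q.dom = blockSquares s d ∧
    (q.dom.filter (fun t => q.val t = Cell.px)).card = 3 ∧
    (q.dom.filter (fun t => q.val t = Cell.empty)).card = 2

/-- A PX block of degree 4 on the board `p`: a block inside `p` with no PY
stones and exactly four PX stones. -/
def isPXBlock4 (p : Pattern) (t d : Square) : Prop :=
  blockSquares t d ⊆ p.dom ∧ (∀ u ∈ blockSquares t d, p.val u ≠ Cell.py) ∧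
  ((blockSquares t d).filter (fun u => p.val u = Cell.px)).card = 4

/-- A simple four for colour `c` on board `p`: a block inside `p` with four
stones of colour `c` and a single empty (trigger) square `g`. -/
def isSimpleFourBlock (p : Pattern) (c : Cell) (t d g : Square) : Prop :=
  d ∈ dirs ∧ blockSquares t d ⊆ p.dom ∧ g ∈ blockSquares t d ∧
  p.val g = Cell.empty ∧ ∀ u ∈ blockSquares t d, u ≠ g → p.val u = c

/-- A simple three for PX on board `p`: a block inside `p` with three PX
stones, two empty squares and no PY stones. -/
def isSimpleThreeBlock (p : Pattern) (t d : Square) : Prop :=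
  d ∈ dirs ∧ blockSquares t d ⊆ p.dom ∧ (∀ u ∈ blockSquares t d, p.val u ≠ Cell.py) ∧
  ((blockSquares t d).filter (fun u => p.val u = Cell.px)).card = 3 ∧
  ((blockSquares t d).filter (fun u => p.val u = Cell.empty)).card = 2

/-- The tracker vector of two blocks `A`, `B`: at each square, the number of
blocks among `A`, `B` in which that square is empty. -/
def tracker (p : Pattern) (A B : Finset Square) (t : Square) : ℕ :=
  (if t ∈ A ∧ p.val t = Cell.empty then 1 else 0) +
  (if t ∈ B ∧ p.val t = Cell.empty then 1 else 0)

/-- The pattern `+XXXX+`: six aligned consecutive squares, four PX stones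
flanked by two empty squares. -/
def d4pat : Pattern :=
  ⟨(Finset.range 6).image (fun i : ℕ => ((i : ℤ), (0 : ℤ))),
   fun s => if s = ((0 : ℤ), (0 : ℤ)) ∨ s = ((5 : ℤ), (0 : ℤ)) then Cell.empty else Cell.px⟩

/-- The pattern `XXXX+`: four aligned consecutive PX stones followed by one
empty square. -/
def s4pat : Pattern :=
  ⟨(Finset.range 5).image (fun i : ℕ => ((i : ℤ), (0 : ℤ))),
   fun s => if s = ((4 : ℤ), (0 : ℤ)) then Cell.empty else Cell.px⟩

/-! Refilling with PX the stone square just emptied gives back the attack `π`, so the emptied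
pattern has an empty square leading to an `n`-step attack. Unless the emptied pattern is already
a victory or an attack, it is therefore a threat, and the fastest attack it reaches takes at most
`n` steps. -/

namespace Pattern

@[simp]
theorem fill_fill (p : Pattern) (s : Square) (c c' : Cell) :
    (p.fill s c).fill s c' = p.fill s c' := by
  simp only [fill, Pattern.mk.injEq, true_and]
  funext t
  split_ifs <;> rfl

theorem fill_val_self (p : Pattern) (s : Square) : p.fill s (p.val s) = p := by
  simp only [fill]
  congr
  funext t
  split_ifs with h <;> simp [h]

theorem fill_empty_fill_of_val_eq (p : Pattern) {s : Square} {c : Cell} (h : p.val s = c) :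
    (p.fill s Cell.empty).fill s c = p := by
  rw [fill_fill, ← h, fill_val_self]

theorem mem_emptySquares_fill_empty (p : Pattern) {s : Square} (hs : s ∈ p.dom) :
    s ∈ (p.fill s Cell.empty).emptySquares := by
  simp [emptySquares, fill, hs]

theorem isPX_fill_empty {p : Pattern} (hp : p.isPX) (s : Square) :
    (p.fill s Cell.empty).isPX := by
  intro t ht
  by_cases h : t = s
  · simp [fill, h]
  · simpa [fill, h] using hp t ht

end Pattern

open Classical in
theorem exists_threatSteps_le_of_attackSteps_fill {p : Pattern} {s : Square} {n : ℕ}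
    (hPX : p.isPX) (hv : ¬ isVictory p) (ha : ¬ isAttack p)
    (hs : s ∈ p.emptySquares) (hn : attackSteps (p.fill s Cell.px) n) :
    ∃ m ≤ n + 1, threatSteps p m := by
  have hreach : ∃ k, ∃ t ∈ p.emptySquares, attackSteps (p.fill t Cell.px) k := ⟨n, s, hs, hn⟩
  obtain ⟨t, ht, hfastest⟩ := Nat.find_spec hreach
  have hkn : Nat.find hreach ≤ n := Nat.find_min' hreach ⟨s, hs, hn⟩
  have hk : 1 ≤ Nat.find hreach := hfastest.2.1
  refine ⟨Nat.find hreach + 1, by omega, ⟨hPX, hv, ha, s, hs, hn.1⟩, by omega, ⟨t, ht, hfastest⟩,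
    fun u hu m hm => Nat.find_min' hreach ⟨u, hu, hm⟩⟩

/-- If π is a PX attack with n steps, then emptying any one square
containing a stone yields a PX threat with at most n+1 steps, or a stronger
pattern (an attack or a victory). -/
theorem stmt2 (π : Pattern) (n : ℕ) (hπ : attackSteps π n)
    (s : Square) (hs : s ∈ π.dom) (hstone : π.val s = Cell.px) :
    isVictory (π.fill s Cell.empty) ∨ isAttack (π.fill s Cell.empty) ∨
      ∃ m ≤ n + 1, threatSteps (π.fill s Cell.empty) m := by
  by_cases hv : isVictory (π.fill s Cell.empty)
  · exact Or.inl hv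
  by_cases ha : isAttack (π.fill s Cell.empty)
  · exact Or.inr (Or.inl ha)
  have hrefill : (π.fill s Cell.empty).fill s Cell.px = π :=
    π.fill_empty_fill_of_val_eq hstone
  refine Or.inr (Or.inr (exists_threatSteps_le_of_attackSteps_fill
    (Pattern.isPX_fill_empty hπ.1.1 s) hv ha (π.mem_emptySquares_fill_empty hs) ?_))
  rwa [hrefill]
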